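/- arXiv:2602.08662 — 2 statements merged into one kernel-verified Lean document; each statement's English description precedes it below -/
import Mathlib

section
/- Fix ζ ∈ ℂ with 0 < |ζ| < 1 and define γ(s) = (1/|ζ|)( e^{is} + ((1−|ζ|²)/conj(ζ)) · Log(1 − conj(ζ) e^{is}) ). Then |dγ/ds| = 1 for all real s. -/
open Complex

/-- For `0 < |ζ| < 1`, the curve
`γ(s) = (1/|ζ|)(e^{is} + ((1−|ζ|²)/conj ζ)·Log(1 − conj ζ · e^{is}))`
has unit speed: `|dγ/ds| = 1` for all `s`. -/
theorem stmt6 (ζ : ℂ) (h0 : 0 < ‖ζ‖) (h1 : ‖ζ‖ < 1)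
    (γ : ℝ → ℂ)
    (hγ : γ = fun s : ℝ => ((‖ζ‖ : ℂ))⁻¹ *
      (Complex.exp (s * Complex.I) +
        ((1 - (‖ζ‖ : ℂ)^2) / starRingEnd ℂ ζ) *
          Complex.log (1 - starRingEnd ℂ ζ * Complex.exp (s * Complex.I)))) :
    ∀ s : ℝ, ‖deriv γ s‖ = 1 := by
  intro s
  set b : ℂ := starRingEnd ℂ ζ with hb
  set c : ℂ := (‖ζ‖ : ℂ) with hc
  set e : ℂ := Complex.exp (s * Complex.I) with he
  have habse : ‖e‖ = 1 := by
    rw [he]; exact Complex.norm_exp_ofReal_mul_I s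
  have habsb : ‖b‖ = ‖ζ‖ := by
    simp [hb]
  have hbne : b ≠ 0 := by
    intro h; rw [h] at habsb; simp at habsb; exact absurd habsb.symm (ne_of_gt h0)
  have hcne : c ≠ 0 := by
    rw [hc]; exact Complex.ofReal_ne_zero.mpr (ne_of_gt h0)
  have habsbe : ‖b * e‖ < 1 := by
    rw [norm_mul, habsb, habse, mul_one]; exact h1
  have huneq : 1 - b * e ≠ 0 := by
    intro h
    have : (1 : ℂ) = b * e := by linear_combination h
    rw [← this] at habsbe; simp at habsbe
  have hslit : 1 - b * e ∈ Complex.slitPlane := by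
    left
    have h2 : (b * e).re ≤ ‖b * e‖ := Complex.re_le_norm _
    simp only [Complex.sub_re, Complex.one_re]
    linarith
  -- derivative of e^{is}
  have hee : HasDerivAt (fun s : ℝ => Complex.exp (s * Complex.I)) (e * Complex.I) s := by
    have h1' : HasDerivAt (fun s : ℝ => (s : ℂ) * Complex.I) Complex.I s := by
      simpa using ((hasDerivAt_id s).ofReal_comp.mul_const Complex.I)
    simpa [he] using h1'.cexp
  have hu : HasDerivAt (fun s : ℝ => 1 - b * Complex.exp (s * Complex.I))
      (-(b * (e * Complex.I))) s := (hee.const_mul b).const_sub 1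
  have hlog : HasDerivAt (fun s : ℝ => Complex.log (1 - b * Complex.exp (s * Complex.I)))
      (-(b * (e * Complex.I)) / (1 - b * e)) s := hu.clog_real hslit
  set a : ℂ := (1 - c ^ 2) / b with ha
  have hγ' : HasDerivAt γ
      (c⁻¹ * (e * Complex.I + a * (-(b * (e * Complex.I)) / (1 - b * e)))) s := by
    rw [hγ]
    exact ((hee.add (hlog.const_mul a)).const_mul c⁻¹)
  have hderiv := hγ'.deriv
  rw [hderiv]
  have hc2 : c ^ 2 = ζ * b := by
    rw [hc, hb]
    rw [← Complex.ofReal_pow, Complex.sq_norm, Complex.mul_conj]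
  have hD : c⁻¹ * (e * Complex.I + a * (-(b * (e * Complex.I)) / (1 - b * e)))
      = (Complex.I * e * b * (ζ - e)) / (c * (1 - b * e)) := by
    rw [ha]
    have h' : 1 - e * b ≠ 0 := by rwa [mul_comm]
    field_simp
    linear_combination e * hc2
  rw [hD]
  have hkey : ‖ζ - e‖ = ‖1 - b * e‖ := by
    have hconj : (starRingEnd ℂ) (1 - b * e) = (starRingEnd ℂ) e * (e - ζ) := by
      have hce : (starRingEnd ℂ) e * e = 1 := by
        rw [he, ← Complex.exp_conj]
        rw [← Complex.exp_add]
        simp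
      rw [map_sub, map_mul, hb]
      simp only [map_one, Complex.conj_conj]
      rw [mul_sub, hce]
      ring
    have := congrArg norm hconj
    rw [Complex.norm_conj, norm_mul, Complex.norm_conj, habse, one_mul] at this
    rw [this, ← neg_sub, norm_neg]
  have habsc : ‖c‖ = ‖ζ‖ := by
    rw [hc, Complex.norm_real, Real.norm_eq_abs, _root_.abs_of_nonneg (norm_nonneg _)]
  rw [norm_div, norm_mul, norm_mul, norm_mul, norm_mul, Complex.norm_I, habse, habsb, hkey, habsc]
  have hne : ‖1 - b * e‖ ≠ 0 := by
    exact norm_ne_zero_iff.mpr huneq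
  field_simp
end

section
/- Fix ζ ∈ ℂ with 0 < |ζ| < 1 and let γ(s) = (1/|ζ|)( e^{is} + ((1−|ζ|²)/conj(ζ)) Log(1 − conj(ζ)e^{is}) ). Then the Fourier coefficients of γ are: γ̂_n = 0 for n ≤ 0, γ̂_1 = |ζ|, and γ̂_n = −(1/n)|ζ|(1−|ζ|²) ζ^{-1} conj(ζ)^{n−2} for n > 1. -/
open Complex Real MeasureTheory

lemma expInt (m : ℤ) :
    (∫ s in (0:ℝ)..(2*π), Complex.exp ((m:ℂ) * s * Complex.I)) =
      if m = 0 then (2*(π:ℂ)) else 0 := by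
  rcases eq_or_ne m 0 with hm | hm
  · subst hm
    simp
  · rw [if_neg hm]
    have hc : ((m:ℂ) * Complex.I) ≠ 0 := by
      simp [Complex.I_ne_zero, hm]
    have harg : ∀ s : ℝ, (m:ℂ) * s * Complex.I = ((m:ℂ) * Complex.I) * s := fun s => by ring
    simp_rw [harg]
    rw [integral_exp_mul_complex hc]
    have h1 : (m:ℂ) * Complex.I * ((2*π:ℝ):ℂ) = (m:ℂ) * (2 * (π:ℂ) * Complex.I) := by
      push_cast; ring
    rw [h1, Complex.exp_int_mul_two_pi_mul_I]
    simp

lemma logInt {w : ℂ} (hw : ‖w‖ < 1) (n : ℤ) :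
    (∫ s in (0:ℝ)..(2*π), Complex.log (1 - w * Complex.exp ((s:ℂ) * Complex.I)) *
        Complex.exp (-(n:ℂ) * s * Complex.I)) =
      if 1 ≤ n then -(2*(π:ℂ)) * w ^ n.toNat / n else 0 := by
  have hle : (0:ℝ) ≤ 2*π := by positivity
  set g : ℕ → ℝ → ℂ := fun k s =>
    (w * Complex.exp ((s:ℂ) * Complex.I))^k / k * Complex.exp (-(n:ℂ) * s * Complex.I) with hg
  have habs : ∀ s : ℝ, ‖w * Complex.exp ((s:ℂ) * Complex.I)‖ = ‖w‖ := by
    intro s; rw [norm_mul, Complex.norm_exp_ofReal_mul_I, mul_one]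
  have habsE : ∀ s : ℝ, ‖Complex.exp (-(n:ℂ) * s * Complex.I)‖ = 1 := by
    intro s
    have : -(n:ℂ) * s * Complex.I = ((-(n*s):ℝ):ℂ) * Complex.I := by push_cast; ring
    rw [this, Complex.norm_exp_ofReal_mul_I]
  have hsum : ∀ s : ℝ, HasSum (fun k => g k s)
      (-Complex.log (1 - w * Complex.exp ((s:ℂ) * Complex.I)) *
        Complex.exp (-(n:ℂ) * s * Complex.I)) := by
    intro s
    exact (Complex.hasSum_taylorSeries_neg_log
      (by rw [habs]; exact hw)).mul_right _
  have hcontE : Continuous fun s : ℝ => Complex.exp ((s:ℂ) * Complex.I) := by fun_prop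
  have hcontN : Continuous fun s : ℝ => Complex.exp (-(n:ℂ) * s * Complex.I) := by fun_prop
  have hgint : ∀ k : ℕ, Integrable (g k) (volume.restrict (Set.Ioc (0:ℝ) (2*π))) :=
    fun k => ((((continuous_const.mul hcontE).pow k).div_const _).mul hcontN).integrableOn_Ioc
  have hnorm : ∀ (k : ℕ) (s : ℝ), ‖g k s‖ = ‖w‖^k / k := by
    intro k s
    simp only [hg, norm_mul, norm_div, norm_pow,
      Complex.norm_exp_ofReal_mul_I, habsE, mul_one, Complex.norm_natCast]
  have hnint : ∀ k : ℕ, (∫ s in Set.Ioc (0:ℝ) (2*π), ‖g k s‖) = ‖w‖^k / k * (2*π) := by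
    intro k
    simp only [hnorm]
    rw [setIntegral_const, measureReal_def, Real.volume_Ioc, smul_eq_mul]
    rw [ENNReal.toReal_ofReal (by linarith)]
    ring
  have hsummable : Summable fun k : ℕ => ∫ s in Set.Ioc (0:ℝ) (2*π), ‖g k s‖ := by
    simp only [hnint]
    apply Summable.mul_right
    apply Summable.of_nonneg_of_le (fun k => by positivity)
      (fun k => ?_) (summable_geometric_of_lt_one (norm_nonneg w) hw)
    rcases Nat.eq_zero_or_pos k with hk | hk
    · simp [hk]
    · exact div_le_self (by positivity) (by exact_mod_cast hk)
  have hswap := integral_tsum_of_summable_integral_norm hgint hsummable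
  have hgval : ∀ k : ℕ, (∫ s in Set.Ioc (0:ℝ) (2*π), g k s) =
      w^k / k * (if ((k:ℤ) - n) = 0 then (2*(π:ℂ)) else 0) := by
    intro k
    have hgk : ∀ s : ℝ, g k s = w^k / k * Complex.exp ((((k:ℤ)-n : ℤ):ℂ) * s * Complex.I) := by
      intro s
      have harg : ((((k:ℤ)-n : ℤ):ℂ)) * s * Complex.I =
          (k:ℂ) * ((s:ℂ) * Complex.I) + (-(n:ℂ) * s * Complex.I) := by push_cast; ring
      simp only [hg]
      rw [harg, Complex.exp_add, Complex.exp_nat_mul]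
      ring
    simp only [hgk]
    rw [MeasureTheory.integral_const_mul, ← intervalIntegral.integral_of_le hle, expInt]
  -- main rewrite
  have hlog : ∀ s : ℝ, Complex.log (1 - w * Complex.exp ((s:ℂ) * Complex.I)) *
      Complex.exp (-(n:ℂ) * s * Complex.I) = -∑' k, g k s := by
    intro s
    rw [(hsum s).tsum_eq]
    ring
  rw [intervalIntegral.integral_of_le hle]
  simp_rw [hlog]
  rw [integral_neg, ← hswap]
  simp only [hgval]
  rcases le_or_gt 1 n with hn | hn
  · rw [if_pos hn]
    rw [tsum_eq_single n.toNat (fun k hk => by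
      rw [if_neg (by omega), mul_zero])]
    rw [if_pos (by omega)]
    have hcast : ((n.toNat : ℕ) : ℂ) = (n : ℂ) := by
      exact_mod_cast congrArg (Int.cast : ℤ → ℂ) (Int.toNat_of_nonneg (by omega))
    rw [hcast]
    ring
  · rw [if_neg (by omega)]
    have hzero : ∀ k : ℕ, w^k / (k:ℂ) * (if ((k:ℤ) - n) = 0 then (2*(π:ℂ)) else 0) = 0 := by
      intro k
      rcases eq_or_ne ((k:ℤ) - n) 0 with h | h
      · have hk0 : k = 0 := by omega
        subst hk0; simp
      · rw [if_neg h, mul_zero]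
    simp only [hzero]
    simp

/-- For `0 < |ζ| < 1` and
`γ(s) = (1/|ζ|)(e^{is} + ((1−|ζ|²)/conj ζ)·Log(1 − conj ζ · e^{is}))`,
the Fourier coefficients of `γ` are `γ̂_n = 0` for `n ≤ 0`, `γ̂_1 = |ζ|`, and
`γ̂_n = −(1/n)|ζ|(1−|ζ|²) ζ⁻¹ (conj ζ)^{n−2}` for `n > 1`. -/
theorem stmt7 (ζ : ℂ) (h0 : 0 < ‖ζ‖) (h1 : ‖ζ‖ < 1)
    (γ : ℝ → ℂ)
    (hγ : γ = fun s : ℝ => ((‖ζ‖ : ℂ))⁻¹ *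
      (Complex.exp (s * Complex.I) +
        ((1 - (‖ζ‖ : ℂ)^2) / starRingEnd ℂ ζ) *
          Complex.log (1 - starRingEnd ℂ ζ * Complex.exp (s * Complex.I))))
    (c : ℤ → ℂ)
    (hc : ∀ n : ℤ, c n = (1/(2*(π:ℂ))) *
      ∫ s in (0:ℝ)..(2*π), γ s * Complex.exp (-(n:ℂ) * s * Complex.I)) :
    (∀ n : ℤ, n ≤ 0 → c n = 0) ∧
    c 1 = (‖ζ‖ : ℂ) ∧
    (∀ n : ℤ, 1 < n → c n = -((n:ℂ))⁻¹ * (‖ζ‖ : ℂ) *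
      (1 - (‖ζ‖ : ℂ)^2) * ζ⁻¹ * (starRingEnd ℂ ζ) ^ (n - 2)) := by
  set a : ℂ := (‖ζ‖ : ℂ) with ha
  set w : ℂ := starRingEnd ℂ ζ with hwdef
  have hζ : ζ ≠ 0 := by
    intro h; rw [h] at h0; simp at h0
  have hwabs : ‖w‖ < 1 := by rwa [hwdef, Complex.norm_conj]
  have hwne : w ≠ 0 := by
    simp [hwdef, hζ]
  have hane : a ≠ 0 := by
    simp only [ha, ne_eq, Complex.ofReal_eq_zero]
    exact ne_of_gt h0
  have hπ : (π:ℂ) ≠ 0 := by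
    exact_mod_cast Real.pi_ne_zero
  have hzw : ζ * w = a^2 := by
    rw [hwdef, Complex.mul_conj, ha, Complex.normSq_eq_norm_sq]
    push_cast
    ring
  have hcontN : ∀ n : ℤ, Continuous fun s : ℝ => Complex.exp (-(n:ℂ) * s * Complex.I) := by
    intro n; fun_prop
  have hcontL : Continuous fun s : ℝ => Complex.log (1 - w * Complex.exp ((s:ℂ) * Complex.I)) := by
    apply Continuous.clog (by fun_prop)
    intro s
    rw [Complex.mem_slitPlane_iff]
    left
    have h2 : ‖w * Complex.exp ((s:ℂ) * Complex.I)‖ < 1 := by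
      rw [norm_mul, Complex.norm_exp_ofReal_mul_I, mul_one]; exact hwabs
    have h3 := Complex.re_le_norm (w * Complex.exp ((s:ℂ) * Complex.I))
    simp only [Complex.sub_re, Complex.one_re]
    linarith
  have master : ∀ n : ℤ, c n = (1/(2*(π:ℂ))) *
      (a⁻¹ * (if (1-n : ℤ) = 0 then 2*(π:ℂ) else 0) +
       (a⁻¹ * ((1-a^2)/w)) * (if 1 ≤ n then -(2*(π:ℂ)) * w ^ n.toNat / n else 0)) := by
    intro n
    rw [hc n]
    congr 1
    have hre : ∀ s : ℝ, γ s * Complex.exp (-(n:ℂ) * s * Complex.I) =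
        a⁻¹ * Complex.exp ((((1-n : ℤ)):ℂ) * s * Complex.I) +
        (a⁻¹ * ((1-a^2)/w)) * (Complex.log (1 - w * Complex.exp ((s:ℂ) * Complex.I)) *
          Complex.exp (-(n:ℂ) * s * Complex.I)) := by
      intro s
      simp only [hγ]
      have harg : (((1-n : ℤ)):ℂ) * s * Complex.I =
          (s:ℂ) * Complex.I + (-(n:ℂ) * s * Complex.I) := by push_cast; ring
      rw [harg, Complex.exp_add]
      ring
    rw [intervalIntegral.integral_congr (fun s _ => hre s)]
    rw [intervalIntegral.integral_add
        (Continuous.intervalIntegrable (by fun_prop) _ _ : IntervalIntegrable (fun s : ℝ => a⁻¹ * Complex.exp ((((1-n : ℤ)):ℂ) * s * Complex.I)) volume 0 (2*π))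
        (by exact Continuous.intervalIntegrable (continuous_const.mul (hcontL.mul (hcontN n))) _ _ : IntervalIntegrable (fun s : ℝ => a⁻¹ * ((1-a^2)/w) * (Complex.log (1 - w * Complex.exp ((s:ℂ) * Complex.I)) * Complex.exp (-(n:ℂ) * s * Complex.I))) volume 0 (2*π)),
      intervalIntegral.integral_const_mul, intervalIntegral.integral_const_mul,
      expInt, logInt hwabs]
  refine ⟨?_, ?_, ?_⟩
  · intro n hn
    rw [master n, if_neg (by omega), if_neg (by omega)]
    simp
  · rw [master 1, if_pos (by norm_num), if_pos (by norm_num)]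
    show (1/(2*(π:ℂ))) * (a⁻¹ * (2*(π:ℂ)) + a⁻¹ * ((1-a^2)/w) * (-(2*(π:ℂ)) * w ^ (1:ℤ).toNat / ((1:ℤ):ℂ))) = a
    norm_num
    field_simp
    ring
  · intro n hn
    rw [master n, if_neg (by omega), if_pos (by omega)]
    have hm : n - 2 = (((n-2).toNat : ℕ) : ℤ) := (Int.toNat_of_nonneg (by omega)).symm
    have hm2 : n.toNat = (n-2).toNat + 2 := by omega
    set m : ℕ := (n-2).toNat with hmdef
    rw [hm, zpow_natCast, hm2]
    have hnne : (n:ℂ) ≠ 0 := by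
      exact_mod_cast (by omega : (n:ℤ) ≠ 0)
    field_simp
    ring_nf
    linear_combination (-(2*(π:ℂ))) * w^(m+1) * (1-a^2) * hzw
end
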